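/- arXiv:2007.00270 — 5 statements merged into one kernel-verified Lean document; each statement's English description precedes it below -/
import Mathlib

section
/- The quadratic polynomial a^2 + b^2 + c^2 + ab + bc + ca + a + b + c represents every nonnegative integer as a, b, c range over the integers. -/
/-!
With `u = a + b`, `v = b + c`, `w = c + a` one has
`8 (a² + b² + c² + ab + bc + ca + a + b + c) + 3 = (2u + 1)² + (2v + 1)² + (2w + 1)²`,
and any three odd numbers are of the form `±(2u + 1), 2v + 1, 2w + 1` with `u + v + w` even.
Since a sum of three squares that is `3 mod 8` has odd summands, the theorem is equivalent to
Gauss's theorem that every `n = 8m + 3` is a sum of three squares.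

For the latter, Dirichlet's theorem gives a prime `p ≡ 1 (mod 4)` with `2p + 1 = nD`; quadratic
reciprocity makes `-D` a square mod `p`, so `h² + D = 2pa`, and the ternary form with Gram matrix
`[[a, h, 1], [h, 2p, 0], [1, 0, n]]` is positive definite of determinant `1` and represents `n`.
The values of such a form are sums of three squares: after moving a minimal vector to `e₀`, with
value `μ = A₀₀`, the scaled Schur complement is a binary form of determinant `μ` whose nonzero
values are at least `3μ²/4`, while Hermite's bound `3 min² ≤ 4 det` for binary forms then forces
`μ = 1`; completing the square reduces to the binary case, which works the same way.
-/

open Matrix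

lemma Int.exists_four_mul_sq_le {m : ℤ} (hm : 0 < m) (c : ℤ) :
    ∃ k, 4 * (m * k + c) ^ 2 ≤ m ^ 2 := by
  refine ⟨-((2 * c + m) / (2 * m)), ?_⟩
  have hdiv := Int.emod_add_mul_ediv (2 * c + m) (2 * m)
  have h0 := Int.emod_nonneg (2 * c + m) (by positivity : 2 * m ≠ 0)
  have h1 := Int.emod_lt_of_pos (2 * c + m) (by positivity : 0 < 2 * m)
  nlinarith

namespace IntegralForm

section General

variable {ι : Type*}

def IsPrimitive (v : ι → ℤ) : Prop := ∀ c : ℤ, (∀ i, c ∣ v i) → IsUnit c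

def IsMinVector [Fintype ι] (A : Matrix ι ι ℤ) (v : ι → ℤ) : Prop :=
  v ≠ 0 ∧ ∀ w ≠ 0, v ⬝ᵥ A *ᵥ v ≤ w ⬝ᵥ A *ᵥ w

lemma isSymm_of_posDef {A : Matrix ι ι ℤ} (hA : A.PosDef) : A.IsSymm :=
  isHermitian_iff_isSymm.1 hA.1

variable [Fintype ι] {A P : Matrix ι ι ℤ}

lemma dotProduct_mulVec_pos (hA : A.PosDef) {v : ι → ℤ} (hv : v ≠ 0) : 0 < v ⬝ᵥ A *ᵥ v := by
  simpa using hA.dotProduct_mulVec_pos hv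

lemma IsMinVector.isPrimitive (hA : A.PosDef) {v : ι → ℤ} (hv : IsMinVector A v) :
    IsPrimitive v := by
  intro c hc
  choose w hw using hc
  have hvw : v = c • w := funext hw
  have hc0 : c ≠ 0 := by rintro rfl; exact hv.1 (by simpa using hvw)
  have hw0 : w ≠ 0 := by rintro rfl; exact hv.1 (by simpa using hvw)
  have hval : v ⬝ᵥ A *ᵥ v = c ^ 2 * (w ⬝ᵥ A *ᵥ w) := by
    rw [hvw, mulVec_smul, dotProduct_smul, smul_dotProduct, smul_eq_mul, smul_eq_mul]; ring
  have hc2 : c ^ 2 ≤ 1 := by nlinarith [hv.2 w hw0, dotProduct_mulVec_pos hA hw0]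
  have : -1 ≤ c ∧ c ≤ 1 := by constructor <;> nlinarith
  rw [Int.isUnit_iff]
  omega

lemma dotProduct_transpose_mul_mul_mulVec (A P : Matrix ι ι ℤ) (w : ι → ℤ) :
    w ⬝ᵥ (Pᵀ * A * P) *ᵥ w = (P *ᵥ w) ⬝ᵥ A *ᵥ (P *ᵥ w) := by
  rw [← mulVec_mulVec, ← mulVec_mulVec, dotProduct_mulVec, vecMul_transpose]

variable [DecidableEq ι]

lemma single_dotProduct_mulVec_single (A : Matrix ι ι ℤ) (i : ι) :
    Pi.single i 1 ⬝ᵥ A *ᵥ Pi.single i 1 = A i i := by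
  simp

lemma exists_isMinVector [Nonempty ι] (hA : A.PosDef) : ∃ v, IsMinVector A v := by
  obtain ⟨i⟩ := ‹Nonempty ι›
  obtain ⟨m, ⟨v, hv, rfl⟩, hmin⟩ := Int.exists_least_of_bdd
    (P := fun m => ∃ v : ι → ℤ, v ≠ 0 ∧ v ⬝ᵥ A *ᵥ v = m)
    ⟨0, fun _ ⟨w, hw, hm⟩ => hm ▸ (dotProduct_mulVec_pos hA hw).le⟩
    ⟨_, Pi.single i 1, by simp, rfl⟩
  exact ⟨v, hv, fun w hw => hmin _ ⟨w, hw, rfl⟩⟩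

lemma posDef_transpose_mul_mul (hA : A.PosDef) (hP : P.det = 1) : (Pᵀ * A * P).PosDef := by
  simpa [conjTranspose_eq_transpose_of_trivial] using
    hA.conjTranspose_mul_mul_same (mulVec_injective_of_isUnit (by simp [isUnit_iff_isUnit_det, hP]))

lemma det_transpose_mul_mul (hP : P.det = 1) : (Pᵀ * A * P).det = A.det := by
  simp [hP]

lemma exists_dotProduct_transpose_mul_mul_eq (hP : P.det = 1) (u : ι → ℤ) :
    ∃ w, w ⬝ᵥ (Pᵀ * A * P) *ᵥ w = u ⬝ᵥ A *ᵥ u := by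
  refine ⟨P⁻¹ *ᵥ u, ?_⟩
  rw [dotProduct_transpose_mul_mul_mulVec, mulVec_mulVec, mul_nonsing_inv _ (by simp [hP]),
    one_mulVec]

lemma IsMinVector.transpose_mul_mul (hP : P.det = 1) {v : ι → ℤ}
    (hv : IsMinVector A (P *ᵥ v)) : IsMinVector (Pᵀ * A * P) v := by
  have hinj : Function.Injective P.mulVec :=
    mulVec_injective_of_isUnit (by simp [isUnit_iff_isUnit_det, hP])
  refine ⟨fun h => hv.1 (by simp [h]), fun w hw => ?_⟩
  simp only [dotProduct_transpose_mul_mul_mulVec]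
  exact hv.2 _ fun h => hw (hinj (by simpa using h))

lemma exists_isMinVector_single (i : ι)
    (hext : ∀ v : ι → ℤ, IsPrimitive v → ∃ P : Matrix ι ι ℤ, P.det = 1 ∧ P.col i = v)
    (hA : A.PosDef) :
    ∃ P : Matrix ι ι ℤ, P.det = 1 ∧ IsMinVector (Pᵀ * A * P) (Pi.single i 1) := by
  have : Nonempty ι := ⟨i⟩
  obtain ⟨v, hv⟩ := exists_isMinVector hA
  obtain ⟨P, hP, hPv⟩ := hext v (hv.isPrimitive hA)
  exact ⟨P, hP, IsMinVector.transpose_mul_mul hP (by rwa [mulVec_single_one, hPv])⟩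

end General

lemma IsPrimitive.exists_det_eq_one_fin_two {v : Fin 2 → ℤ} (hv : IsPrimitive v) :
    ∃ P : Matrix (Fin 2) (Fin 2) ℤ, P.det = 1 ∧ P.col 0 = v := by
  obtain ⟨α, β, h⟩ := IsRelPrime.isCoprime fun c h0 h1 => hv c (Fin.forall_fin_two.2 ⟨h0, h1⟩)
  refine ⟨!![v 0, -β; v 1, α], by rw [det_fin_two_of]; linear_combination h, ?_⟩
  ext i; fin_cases i <;> rfl

lemma IsPrimitive.exists_det_eq_one_fin_three {v : Fin 3 → ℤ} (hv : IsPrimitive v) :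
    ∃ P : Matrix (Fin 3) (Fin 3) ℤ, P.det = 1 ∧ P.col 0 = v := by
  obtain ⟨g, x, y, α, β, hx, hy, hαβ, hg⟩ : ∃ g x y α β : ℤ, v 0 = g * x ∧ v 1 = g * y ∧
      α * x + β * y = 1 ∧ IsCoprime g (v 2) := by
    by_cases h01 : v 0 = 0 ∧ v 1 = 0
    · refine ⟨0, 1, 0, 1, 0, by simp [h01.1], by simp [h01.2], by ring, ?_⟩
      rw [isCoprime_zero_left]
      exact hv _ fun i => by fin_cases i <;> simp [h01.1, h01.2]
    · have hpos : 0 < Int.gcd (v 0) (v 1) := Int.gcd_pos_iff.2 (not_and_or.1 h01)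
      obtain ⟨x, y, hxy, hx, hy⟩ := Int.exists_gcd_one hpos
      obtain ⟨α, β, hαβ⟩ := Int.isCoprime_iff_gcd_eq_one.2 hxy
      refine ⟨_, x, y, α, β, hx.trans (mul_comm _ _), hy.trans (mul_comm _ _), hαβ, ?_⟩
      refine IsRelPrime.isCoprime fun c hc h2 => hv c fun i => ?_
      fin_cases i
      · exact hc.trans (Int.gcd_dvd_left _ _)
      · exact hc.trans (Int.gcd_dvd_right _ _)
      · exact h2
  obtain ⟨s, t, hst⟩ := hg
  -- expanding along the last row, the determinant is `(s * g + t * v 2) * (α * x + β * y) = 1`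
  refine ⟨!![v 0, -β, -t * x; v 1, α, -t * y; v 2, 0, s], ?_, ?_⟩
  · simp [det_fin_three]
    linear_combination s * α * hx + s * β * hy + (s * g + t * v 2) * hαβ + hst
  · ext i; fin_cases i <;> rfl

variable {n : ℕ}

/-- `B 0 0` times the Schur complement of the entry `B 0 0`, which keeps it integral. -/
def schurComplement (B : Matrix (Fin (n + 1)) (Fin (n + 1)) ℤ) : Matrix (Fin n) (Fin n) ℤ :=
  of fun i j => B 0 0 * B i.succ j.succ - B 0 i.succ * B 0 j.succ

lemma mul_cons_dotProduct_mulVec_cons {B : Matrix (Fin (n + 1)) (Fin (n + 1)) ℤ} (hB : B.IsSymm)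
    (x : ℤ) (v : Fin n → ℤ) :
    B 0 0 * (Fin.cons x v ⬝ᵥ B *ᵥ Fin.cons x v) =
      (B 0 0 * x + ∑ j, B 0 j.succ * v j) ^ 2 + v ⬝ᵥ schurComplement B *ᵥ v := by
  set L := ∑ j, B 0 j.succ * v j
  set Q := ∑ i, v i * ∑ j, B i.succ j.succ * v j
  have hcross : ∑ i, v i * (B i.succ 0 * x + ∑ j, B i.succ j.succ * v j) = x * L + Q := by
    simp only [mul_add, Finset.sum_add_distrib, L, Q, Finset.mul_sum]
    congr 1
    exact Finset.sum_congr rfl fun i _ => by rw [hB.apply]; ring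
  have hschur : v ⬝ᵥ schurComplement B *ᵥ v = B 0 0 * Q - L ^ 2 := by
    simp only [dotProduct, mulVec, schurComplement, of_apply, L, Q]
    rw [sq, Finset.sum_mul_sum, Finset.mul_sum, ← Finset.sum_sub_distrib]
    refine Finset.sum_congr rfl fun i _ => ?_
    simp only [Finset.mul_sum, ← Finset.sum_sub_distrib]
    exact Finset.sum_congr rfl fun j _ => by ring
  rw [hschur]
  simp only [dotProduct, mulVec, Fin.sum_univ_succ, Fin.cons_zero, Fin.cons_succ]
  rw [hcross]
  ring

variable {B : Matrix (Fin (n + 1)) (Fin (n + 1)) ℤ}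

lemma isSymm_schurComplement (hB : B.IsSymm) : (schurComplement B).IsSymm :=
  IsSymm.ext fun i j => by simp only [schurComplement, of_apply, hB.apply]; ring

lemma posDef_schurComplement (hB : B.PosDef) : (schurComplement B).PosDef := by
  have hsymm := isSymm_of_posDef hB
  refine PosDef.of_dotProduct_mulVec_pos (isHermitian_iff_isSymm.2 (isSymm_schurComplement hsymm))
    fun v hv => ?_
  have h0 : 0 < B 0 0 := by simpa using hB.diag_pos (i := 0)
  set L := ∑ j, B 0 j.succ * v j
  -- at `(-L, B 0 0 • v)` the square in the identity vanishes, leaving `B 0 0 ^ 2` times `S(v)`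
  have hw : (Fin.cons (-L) (B 0 0 • v) : Fin (n + 1) → ℤ) ≠ 0 := fun h =>
    hv (funext fun j => by simpa [h0.ne'] using congrFun h j.succ)
  have hid := mul_cons_dotProduct_mulVec_cons hsymm (-L) (B 0 0 • v)
  simp only [Pi.smul_apply, smul_eq_mul, mulVec_smul, dotProduct_smul, smul_dotProduct] at hid
  have hL : ∑ j, B 0 j.succ * (B 0 0 * v j) = B 0 0 * L := by
    rw [Finset.mul_sum]; exact Finset.sum_congr rfl fun _ _ => by ring
  rw [hL, mul_neg, neg_add_cancel, sq, zero_mul, zero_add] at hid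
  have hpos : 0 < B 0 0 * (B 0 0 * (v ⬝ᵥ schurComplement B *ᵥ v)) :=
    hid ▸ mul_pos h0 (dotProduct_mulVec_pos hB hw)
  rw [star_trivial]
  exact pos_of_mul_pos_right (pos_of_mul_pos_right hpos h0.le) h0.le

lemma posDef_of_schurComplement (hB : B.IsSymm) (h0 : 0 < B 0 0)
    (hS : (schurComplement B).PosDef) : B.PosDef := by
  refine PosDef.of_dotProduct_mulVec_pos (isHermitian_iff_isSymm.2 hB) fun w hw => ?_
  rw [star_trivial, ← Fin.cons_self_tail w]
  have hid := mul_cons_dotProduct_mulVec_cons hB (w 0) (Fin.tail w)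
  have hpos : 0 < B 0 0 * (Fin.cons (w 0) (Fin.tail w) ⬝ᵥ B *ᵥ Fin.cons (w 0) (Fin.tail w)) := by
    rw [hid]
    by_cases ht : Fin.tail w = 0
    · have hw0 : w 0 ≠ 0 := fun h => hw (funext fun j => Fin.cases h (congrFun ht) j)
      simp only [ht, Pi.zero_apply, mul_zero, Finset.sum_const_zero, add_zero, zero_dotProduct]
      positivity
    · nlinarith [dotProduct_mulVec_pos hS ht,
        sq_nonneg (B 0 0 * w 0 + ∑ j, B 0 j.succ * Fin.tail w j)]
  exact pos_of_mul_pos_right hpos h0.le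

lemma three_mul_sq_le_schurComplement (hB : B.PosDef) (hmin : IsMinVector B (Pi.single 0 1))
    {v : Fin n → ℤ} (hv : v ≠ 0) :
    3 * B 0 0 ^ 2 ≤ 4 * (v ⬝ᵥ schurComplement B *ᵥ v) := by
  have h0 : 0 < B 0 0 := by simpa using hB.diag_pos (i := 0)
  obtain ⟨k, hk⟩ := Int.exists_four_mul_sq_le h0 (∑ j, B 0 j.succ * v j)
  have hw : (Fin.cons k v : Fin (n + 1) → ℤ) ≠ 0 := fun h =>
    hv (funext fun j => by simpa using congrFun h j.succ)
  have hle := hmin.2 _ hw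
  rw [single_dotProduct_mulVec_single] at hle
  have hid := mul_cons_dotProduct_mulVec_cons (isSymm_of_posDef hB) k v
  nlinarith

section Binary

variable {A : Matrix (Fin 2) (Fin 2) ℤ}

lemma dotProduct_schurComplement_mulVec_fin_two (hA : A.IsSymm) (v : Fin 1 → ℤ) :
    v ⬝ᵥ schurComplement A *ᵥ v = A.det * v 0 ^ 2 := by
  simp [dotProduct, mulVec, schurComplement, det_fin_two, hA.apply 0 1]
  ring

lemma posDef_of_det_pos_fin_two (hA : A.IsSymm) (h0 : 0 < A 0 0) (hdet : 0 < A.det) :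
    A.PosDef := by
  refine posDef_of_schurComplement hA h0 (PosDef.of_dotProduct_mulVec_pos
    (isHermitian_iff_isSymm.2 (isSymm_schurComplement hA)) fun v hv => ?_)
  have : v 0 ≠ 0 := fun h => hv (funext fun i => by fin_cases i; exact h)
  rw [star_trivial, dotProduct_schurComplement_mulVec_fin_two hA]
  positivity

lemma exists_three_mul_sq_le_det_fin_two (hA : A.PosDef) :
    ∃ v ≠ 0, 3 * (v ⬝ᵥ A *ᵥ v) ^ 2 ≤ 4 * A.det := by
  obtain ⟨P, hP, hmin⟩ := exists_isMinVector_single 0 (fun _ hv => hv.exists_det_eq_one_fin_two) hA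
  have hB := posDef_transpose_mul_mul hA hP
  have h := three_mul_sq_le_schurComplement hB hmin one_ne_zero
  rw [dotProduct_schurComplement_mulVec_fin_two (isSymm_of_posDef hB), det_transpose_mul_mul hP]
    at h
  have hval := dotProduct_transpose_mul_mul_mulVec A P (Pi.single 0 1)
  rw [single_dotProduct_mulVec_single] at hval
  refine ⟨P *ᵥ Pi.single 0 1, fun h0 => ?_, by rw [← hval]; simpa using h⟩
  exact (hB.diag_pos (i := 0)).ne' (by rw [hval, h0, zero_dotProduct])

lemma exists_sq_add_sq_of_det_eq_one (hA : A.PosDef) (hdet : A.det = 1) (u : Fin 2 → ℤ) :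
    ∃ x y, x ^ 2 + y ^ 2 = u ⬝ᵥ A *ᵥ u := by
  obtain ⟨P, hP, hmin⟩ := exists_isMinVector_single 0 (fun _ hv => hv.exists_det_eq_one_fin_two) hA
  have hB := posDef_transpose_mul_mul hA hP
  have hdetB : (Pᵀ * A * P).det = 1 := by rw [det_transpose_mul_mul hP, hdet]
  have h := three_mul_sq_le_schurComplement hB hmin one_ne_zero
  rw [dotProduct_schurComplement_mulVec_fin_two (isSymm_of_posDef hB), hdetB, Pi.one_apply,
    one_pow, mul_one] at h
  have h1 : (Pᵀ * A * P) 0 0 = 1 := by nlinarith [hB.diag_pos (i := 0)]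
  obtain ⟨w, hw⟩ := exists_dotProduct_transpose_mul_mul_eq hP u
  have hid := mul_cons_dotProduct_mulVec_cons (isSymm_of_posDef hB) (w 0) (Fin.tail w)
  rw [Fin.cons_self_tail, h1, dotProduct_schurComplement_mulVec_fin_two
    (isSymm_of_posDef hB), hdetB] at hid
  simp only [one_mul] at hid
  exact ⟨_, _, hid.symm.trans hw⟩

end Binary

section Ternary

variable {A : Matrix (Fin 3) (Fin 3) ℤ}

lemma det_schurComplement_fin_three (hA : A.IsSymm) :
    (schurComplement A).det = A 0 0 * A.det := by
  simp [det_fin_two, det_fin_three, schurComplement, hA.apply 0 1, hA.apply 0 2, hA.apply 1 2]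
  ring

lemma posDef_of_det_pos_fin_three (hA : A.IsSymm) (h0 : 0 < A 0 0)
    (h1 : 0 < A 0 0 * A 1 1 - A 0 1 ^ 2) (hdet : 0 < A.det) : A.PosDef :=
  posDef_of_schurComplement hA h0 <| posDef_of_det_pos_fin_two (isSymm_schurComplement hA)
    (by simpa [schurComplement, sq] using h1)
    (by rw [det_schurComplement_fin_three hA]; positivity)

lemma apply_zero_zero_eq_one_of_isMinVector (hA : A.PosDef) (hdet : A.det = 1)
    (hmin : IsMinVector A (Pi.single 0 1)) : A 0 0 = 1 := by
  have h0 := hA.diag_pos (i := 0)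
  obtain ⟨v, hv, hS⟩ := exists_three_mul_sq_le_det_fin_two (posDef_schurComplement hA)
  rw [det_schurComplement_fin_three (isSymm_of_posDef hA), hdet, mul_one] at hS
  have hm := three_mul_sq_le_schurComplement hA hmin hv
  have hsq := pow_le_pow_left₀ (by positivity) hm 2
  have hcube : 27 * A 0 0 ^ 3 ≤ 64 := by nlinarith
  nlinarith

lemma exists_sq_add_sq_add_sq_of_det_eq_one (hA : A.PosDef) (hdet : A.det = 1) (u : Fin 3 → ℤ) :
    ∃ x y z, x ^ 2 + y ^ 2 + z ^ 2 = u ⬝ᵥ A *ᵥ u := by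
  obtain ⟨P, hP, hmin⟩ :=
    exists_isMinVector_single 0 (fun _ hv => hv.exists_det_eq_one_fin_three) hA
  have hB := posDef_transpose_mul_mul hA hP
  have hdetB : (Pᵀ * A * P).det = 1 := by rw [det_transpose_mul_mul hP, hdet]
  have h1 := apply_zero_zero_eq_one_of_isMinVector hB hdetB hmin
  obtain ⟨w, hw⟩ := exists_dotProduct_transpose_mul_mul_eq hP u
  have hid := mul_cons_dotProduct_mulVec_cons (isSymm_of_posDef hB) (w 0) (Fin.tail w)
  rw [Fin.cons_self_tail, h1, one_mul] at hid
  obtain ⟨y, z, hyz⟩ := exists_sq_add_sq_of_det_eq_one (posDef_schurComplement hB)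
    (by rw [det_schurComplement_fin_three (isSymm_of_posDef hB), h1, hdetB, one_mul]) (Fin.tail w)
  exact ⟨_, y, z, by rw [← hw, hid, ← hyz, add_assoc]⟩

end Ternary

end IntegralForm

open IntegralForm

lemma exists_prime_dvd_two_mul_add_one (m : ℕ) :
    ∃ p : ℕ, p.Prime ∧ p % 4 = 1 ∧ 8 * m + 3 ∣ 2 * p + 1 := by
  obtain ⟨p, -, hp, hpk⟩ := Nat.forall_exists_prime_gt_and_zmodEq 0 (q := 4 * (8 * m + 3))
    (a := 4 * m + 1) (by omega) ⟨1 + 8 * m, -m, by push_cast; ring⟩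
  push_cast at hpk
  refine ⟨p, hp, ?_, ?_⟩
  · have h4 := (hpk.of_mul_right _).eq
    omega
  · have hn : (2 * p + 1 : ℤ) ≡ 0 [ZMOD 8 * m + 3] :=
      (((hpk.of_mul_left 4).mul_left 2).add_right 1).trans (Int.modEq_zero_iff_dvd.2 ⟨1, by ring⟩)
    exact_mod_cast Int.modEq_zero_iff_dvd.1 hn

lemma jacobiSym_neg_eq_one {m p D : ℕ} (hp : p % 4 = 1) (hD : (8 * m + 3) * D = 2 * p + 1) :
    jacobiSym (-D) p = 1 := by
  have hDz : ((8 * m + 3 : ℕ) : ℤ) * D = 2 * p + 1 := by exact_mod_cast hD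
  have hn : Odd (8 * m + 3) := ⟨4 * m + 1, by ring⟩
  have h2 : jacobiSym 2 (8 * m + 3) = -1 := by
    rw [jacobiSym.at_two hn, ZMod.χ₈_nat_mod_eight, show (8 * m + 3) % 8 = 3 by omega]; rfl
  have hneg : jacobiSym (-1) (8 * m + 3) = -1 := by
    rw [jacobiSym.at_neg_one hn, ZMod.χ₄_nat_three_mod_four (by omega)]
  have h2p : jacobiSym (2 * p) (8 * m + 3) = jacobiSym (-1) (8 * m + 3) := by
    refine jacobiSym.mod_left' ?_
    rw [show (2 * p : ℤ) = -1 + ((8 * m + 3 : ℕ) : ℤ) * D by linarith, Int.add_mul_emod_self_left]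
  have hnp : jacobiSym (8 * m + 3 : ℕ) p = 1 := by
    rw [← jacobiSym.quadratic_reciprocity_one_mod_four hp hn]
    rw [jacobiSym.mul_left, h2, hneg] at h2p
    linarith
  have hnDp : jacobiSym ((8 * m + 3 : ℕ) * D) p = 1 := by
    rw [hDz, jacobiSym.mod_left' (a₂ := 1), jacobiSym.one_left]
    rw [show (2 * p + 1 : ℤ) = 1 + p * 2 by ring, Int.add_mul_emod_self_left]
  rw [jacobiSym.mul_left, hnp, one_mul] at hnDp
  rw [jacobiSym.neg _ (Nat.odd_iff.2 (by omega)), ZMod.χ₄_nat_one_mod_four hp, one_mul, hnDp]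

lemma exists_sq_add_eq_two_mul_mul {p D : ℕ} [Fact p.Prime] (hp : Odd p) (hD : Odd D)
    (hJ : jacobiSym (-D) p = 1) : ∃ h a : ℤ, h ^ 2 + D = 2 * p * a := by
  obtain ⟨r, hr⟩ := ZMod.isSquare_of_jacobiSym_eq_one hJ
  have hr0 : (p : ℤ) ∣ (r.val : ℤ) ^ 2 + D := by
    rw [← ZMod.intCast_zmod_eq_zero_iff_dvd]
    push_cast at hr ⊢
    rw [ZMod.natCast_zmod_val]
    linear_combination -hr
  -- shifting by a multiple of `p` makes the square root odd, so that `2 ∣ h ^ 2 + D` as well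
  set h : ℤ := r.val + p * (r.val + 1)
  have hodd : Odd h := by
    rcases Int.even_or_odd (r.val : ℤ) with he | ho
    · exact he.add_odd ((Int.odd_coe_nat p).2 hp |>.mul he.add_one)
    · exact ho.add_even ((ho.add_one).mul_left _)
  have h2 : (2 : ℤ) ∣ h ^ 2 + D := even_iff_two_dvd.1 (hodd.pow.add_odd (by exact_mod_cast hD))
  have hpd : (p : ℤ) ∣ h ^ 2 + D := by
    have : h ^ 2 + D = (r.val : ℤ) ^ 2 + D + p * ((r.val + 1) * (2 * r.val + p * (r.val + 1))) := by
      ring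
    rw [this]
    exact dvd_add hr0 (dvd_mul_right _ _)
  have hcop : IsCoprime (2 : ℤ) p := Nat.isCoprime_iff_coprime.2 (Nat.coprime_two_left.2 hp)
  obtain ⟨a, ha⟩ := hcop.mul_dvd h2 hpd
  exact ⟨h, a, ha⟩

lemma exists_posDef_det_eq_one_repr_eight_mul_add_three (m : ℕ) :
    ∃ A : Matrix (Fin 3) (Fin 3) ℤ, A.PosDef ∧ A.det = 1 ∧ ∃ u, u ⬝ᵥ A *ᵥ u = 8 * m + 3 := by
  obtain ⟨p, hp, hp4, D, hD⟩ := exists_prime_dvd_two_mul_add_one m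
  have : Fact p.Prime := ⟨hp⟩
  have hDodd : Odd D := (Nat.odd_mul.1 (hD ▸ odd_two_mul_add_one p)).2
  obtain ⟨h, a, ha⟩ := exists_sq_add_eq_two_mul_mul (Nat.odd_iff.2 (by omega)) hDodd
    (jacobiSym_neg_eq_one hp4 hD.symm)
  have hDz : (8 * m + 3 : ℤ) * D = 2 * p + 1 := by exact_mod_cast hD.symm
  have hD0 : (0 : ℤ) < D := by exact_mod_cast hDodd.pos
  have ha0 : 0 < a := by nlinarith [sq_nonneg h, hp.pos]
  set A : Matrix (Fin 3) (Fin 3) ℤ := !![a, h, 1; h, 2 * p, 0; 1, 0, 8 * m + 3]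
  have hdet : A.det = 1 := by
    simp [A, det_fin_three]; linear_combination (-(8 * m + 3 : ℤ)) * ha + hDz
  refine ⟨A, posDef_of_det_pos_fin_three ?_ (by simpa [A] using ha0) ?_ (hdet ▸ one_pos), hdet,
    Pi.single 2 1, by simp [A]⟩
  · exact IsSymm.ext fun i j => by fin_cases i <;> fin_cases j <;> rfl
  · simp [A]; linarith

lemma odd_of_sq_add_sq_add_sq_emod_four {x y z : ℤ} (h : (x ^ 2 + y ^ 2 + z ^ 2) % 4 = 3) :
    Odd x ∧ Odd y ∧ Odd z := by
  have hle : ∀ t : ℤ, t ^ 2 % 4 ≤ 1 := fun t => by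
    rcases Int.even_or_odd t with ⟨k, rfl⟩ | ht
    · rw [show (k + k) ^ 2 = 4 * k ^ 2 by ring, Int.mul_emod_right]; norm_num
    · exact (Int.sq_mod_four_eq_one_of_odd ht).le
  have hodd : ∀ a b c : ℤ, (a ^ 2 + b ^ 2 + c ^ 2) % 4 = 3 → Odd a := fun a b c h => by
    by_contra ha
    obtain ⟨k, rfl⟩ := Int.not_odd_iff_even.1 ha
    have hb := hle b
    have hc := hle c
    rw [show (k + k) ^ 2 = 4 * k ^ 2 by ring] at h
    omega
  exact ⟨hodd x y z h, hodd y z x (by rw [← h]; ring_nf), hodd z x y (by rw [← h]; ring_nf)⟩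

lemma exists_eq_sq_add_sq_add_sq_of_odd {X Y Z : ℤ} (hX : Odd X) (hY : Odd Y) (hZ : Odd Z) :
    ∃ a b c : ℤ, (2 * (a + b) + 1) ^ 2 + (2 * (b + c) + 1) ^ 2 + (2 * (c + a) + 1) ^ 2 =
      X ^ 2 + Y ^ 2 + Z ^ 2 := by
  obtain ⟨u, rfl⟩ := hX
  obtain ⟨v, rfl⟩ := hY
  obtain ⟨w, rfl⟩ := hZ
  rcases Int.even_or_odd (u + v + w) with ⟨t, ht⟩ | ⟨t, ht⟩
  · obtain rfl : w = t + t - u - v := by linarith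
    exact ⟨t - v, v + u - t, t - u, by ring⟩
  · obtain rfl : w = 2 * t + 1 - u - v := by linarith
    exact ⟨t - u - v, v - t - 1, t + 1, by ring⟩

theorem exists_sq_add_sq_add_sq_eq_eight_mul_add_three (m : ℕ) :
    ∃ x y z : ℤ, x ^ 2 + y ^ 2 + z ^ 2 = 8 * m + 3 := by
  obtain ⟨A, hA, hdet, u, hu⟩ := exists_posDef_det_eq_one_repr_eight_mul_add_three m
  obtain ⟨x, y, z, hxyz⟩ := exists_sq_add_sq_add_sq_of_det_eq_one hA hdet u
  exact ⟨x, y, z, hxyz.trans hu⟩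

theorem universal_qp2 (m : ℕ) :
    ∃ a b c : ℤ, a ^ 2 + b ^ 2 + c ^ 2 + a * b + b * c + c * a + a + b + c = m := by
  obtain ⟨x, y, z, hxyz⟩ := exists_sq_add_sq_add_sq_eq_eight_mul_add_three m
  obtain ⟨hx, hy, hz⟩ := odd_of_sq_add_sq_add_sq_emod_four (by rw [hxyz]; omega)
  obtain ⟨a, b, c, habc⟩ := exists_eq_sq_add_sq_add_sq_of_odd hx hy hz
  exact ⟨a, b, c, by linarith [habc.trans hxyz]⟩
end

section
/- The quadratic form a^2 + ab + b^2 + ac + bc + c^2 + d^2 (root lattice A_3 ⊥ A_1 form a^2 + (b+c)a + b^2 + bc + c^2 + d^2) represents every nonnegative integer as a, b, c, d range over the integers. -/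
/-!
Write `Q(a, b, c) = a² + ab + b² + ac + bc + c²`. Since
`2 Q(a, b, c) = (a + b)² + (b + c)² + (c + a)²`, we get `Q(Y + Z, X - Z, Z - Y) = X² + Y² + 2Z²`,
so it suffices that every odd `n` is `X² + Y² + 2Z²`: an even `m > 0` is `(m - 1) + 1²`.

For odd `n`, Dirichlet's theorem gives a prime `p ≡ 2n - 1 (mod 8n)`. Quadratic reciprocity makes
`-2n` a square mod `p`, so `p ∣ nγ² + 2` for some `γ`, and the ternary form with Gram matrix
`[[n, 1, 0], [1, β, γ], [0, γ, δ]]` (where `nβ = p + 1`, `pδ = nγ² + 2`) is positive definite of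
determinant `2` and represents `n`. Every such form is equivalent to `x² + y² + 2z²`: once a minimal
vector is moved to `e₀`, Hermite's bound for the Schur complement of the corner forces the minimum
to be `1`. What remains is a positive binary form of determinant `2`, and the same argument turns
it into `y² + 2z²`.
-/

open Matrix

def IsPrimitiveVector {n : Type*} (v : n → ℤ) : Prop := ∀ g : ℤ, (∀ i, g ∣ v i) → IsUnit g

namespace Matrix

section CommRing

variable {n R : Type*} [Fintype n] [CommRing R]

lemma dotProduct_mulVec_transpose_mul_mul (A P : Matrix n n R) (v : n → R) :
    v ⬝ᵥ (Pᵀ * A * P) *ᵥ v = (P *ᵥ v) ⬝ᵥ A *ᵥ (P *ᵥ v) := by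
  rw [← mulVec_mulVec, ← mulVec_mulVec, dotProduct_mulVec, vecMul_transpose]

lemma dotProduct_mulVec_smul (A : Matrix n n R) (g : R) (v : n → R) :
    (g • v) ⬝ᵥ A *ᵥ (g • v) = g ^ 2 * (v ⬝ᵥ A *ᵥ v) := by
  rw [mulVec_smul, smul_dotProduct, dotProduct_smul, smul_eq_mul, smul_eq_mul]
  ring

variable [DecidableEq n] {A P : Matrix n n R}

lemma single_dotProduct_mulVec_single (A : Matrix n n R) (i : n) :
    Pi.single i 1 ⬝ᵥ A *ᵥ Pi.single i 1 = A i i := by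
  simp

lemma det_transpose_mul_mul (hP : P.det = 1) : (Pᵀ * A * P).det = A.det := by
  simp [hP]

lemma mulVec_injective_of_det_eq_one (hP : P.det = 1) : Function.Injective P.mulVec :=
  mulVec_injective_of_isUnit ((isUnit_iff_isUnit_det P).mpr (hP ▸ isUnit_one))

lemma mulVec_ne_zero_of_det_eq_one (hP : P.det = 1) {w : n → R} (hw : w ≠ 0) : P *ᵥ w ≠ 0 :=
  fun h ↦ hw <| mulVec_injective_of_det_eq_one hP (h.trans (mulVec_zero P).symm)

lemma exists_dotProduct_mulVec_eq_transpose_mul_mul (hP : P.det = 1) (v : n → R) :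
    ∃ w, v ⬝ᵥ A *ᵥ v = w ⬝ᵥ (Pᵀ * A * P) *ᵥ w :=
  ⟨P.adjugate *ᵥ v, by rw [dotProduct_mulVec_transpose_mul_mul, mulVec_mulVec, mul_adjugate, hP,
    one_smul, one_mulVec]⟩

end CommRing

variable {n : Type*} {A P : Matrix n n ℤ}

lemma PosDef.isSymm_int (hA : A.PosDef) : A.IsSymm :=
  isHermitian_iff_isSymm.mp hA.isHermitian

variable [Fintype n]

lemma PosDef.dotProduct_mulVec_pos_int (hA : A.PosDef) {v : n → ℤ} (hv : v ≠ 0) :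
    0 < v ⬝ᵥ A *ᵥ v := by
  simpa using hA.dotProduct_mulVec_pos hv

lemma PosDef.exists_min [Nonempty n] (hA : A.PosDef) :
    ∃ v ≠ 0, ∀ w ≠ 0, v ⬝ᵥ A *ᵥ v ≤ w ⬝ᵥ A *ᵥ w := by
  obtain ⟨_, ⟨v, hv, rfl⟩, hmin⟩ :=
    Int.exists_least_of_bdd (P := fun m ↦ ∃ w ≠ 0, w ⬝ᵥ A *ᵥ w = m)
      ⟨0, fun _ ⟨w, hw, hm⟩ ↦ hm ▸ (hA.dotProduct_mulVec_pos_int hw).le⟩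
      ⟨_, fun _ ↦ 1, fun h ↦ one_ne_zero (congrFun h (Classical.arbitrary n)), rfl⟩
  exact ⟨v, hv, fun w hw ↦ hmin _ ⟨w, hw, rfl⟩⟩

lemma PosDef.isPrimitiveVector_of_min (hA : A.PosDef) {v : n → ℤ} (hv : v ≠ 0)
    (hmin : ∀ w ≠ 0, v ⬝ᵥ A *ᵥ v ≤ w ⬝ᵥ A *ᵥ w) : IsPrimitiveVector v := by
  intro g hg
  choose w hw using hg
  have hvw : v = g • w := funext hw
  have hw0 : w ≠ 0 := by rintro rfl; exact hv (by simpa using hvw)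
  have hg0 : g ≠ 0 := by rintro rfl; exact hv (by simpa using hvw)
  have hle := hmin w hw0
  rw [hvw, dotProduct_mulVec_smul] at hle
  have hg1 : |g| ≤ 1 := (sq_le_one_iff_abs_le_one g).mp <| by
    nlinarith [hA.dotProduct_mulVec_pos_int hw0]
  rw [Int.isUnit_iff]
  rcases abs_le.mp hg1 with ⟨h1, h2⟩
  omega

variable [DecidableEq n]

lemma PosDef.corner_pos (hA : A.PosDef) (i : n) : 0 < A i i := by
  simpa using hA.dotProduct_mulVec_pos_int (v := Pi.single i 1) (by simp)

lemma PosDef.transpose_mul_mul (hA : A.PosDef) (hP : P.det = 1) : (Pᵀ * A * P).PosDef := by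
  simpa [conjTranspose_eq_transpose_of_trivial] using
    hA.conjTranspose_mul_mul_same (mulVec_injective_of_det_eq_one hP)

lemma PosDef.exists_transpose_mul_mul_corner_min (hA : A.PosDef) (i₀ : n)
    (hcompl : ∀ v : n → ℤ, IsPrimitiveVector v → ∃ P : Matrix n n ℤ, P.det = 1 ∧ P.col i₀ = v) :
    ∃ P : Matrix n n ℤ, P.det = 1 ∧ ∀ w ≠ 0, (Pᵀ * A * P) i₀ i₀ ≤ w ⬝ᵥ (Pᵀ * A * P) *ᵥ w := by
  have : Nonempty n := ⟨i₀⟩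
  obtain ⟨v, hv, hmin⟩ := hA.exists_min
  obtain ⟨P, hP, hPv⟩ := hcompl v (hA.isPrimitiveVector_of_min hv hmin)
  refine ⟨P, hP, fun w hw ↦ ?_⟩
  rw [← single_dotProduct_mulVec_single (Pᵀ * A * P), dotProduct_mulVec_transpose_mul_mul,
    mulVec_single_one, hPv, dotProduct_mulVec_transpose_mul_mul]
  exact hmin _ (mulVec_ne_zero_of_det_eq_one hP hw)

end Matrix

lemma IsPrimitiveVector.isCoprime_fin_two {v : Fin 2 → ℤ} (hv : IsPrimitiveVector v) :
    IsCoprime (v 0) (v 1) := by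
  refine Int.isCoprime_iff_gcd_eq_one.mpr <| Nat.isUnit_iff.mp <| Int.ofNat_isUnit.mp <| hv _ ?_
  intro i
  fin_cases i
  exacts [Int.gcd_dvd_left .., Int.gcd_dvd_right ..]

lemma IsPrimitiveVector.isCoprime_gcd_fin_three {v : Fin 3 → ℤ} (hv : IsPrimitiveVector v) :
    IsCoprime (Int.gcd (v 0) (v 1) : ℤ) (v 2) := by
  refine Int.isCoprime_iff_gcd_eq_one.mpr <| Nat.isUnit_iff.mp <| Int.ofNat_isUnit.mp <| hv _ ?_
  intro i
  fin_cases i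
  exacts [(Int.gcd_dvd_left ..).trans (Int.gcd_dvd_left ..),
    (Int.gcd_dvd_left ..).trans (Int.gcd_dvd_right ..), Int.gcd_dvd_right ..]

lemma IsPrimitiveVector.exists_det_eq_one_col_eq_fin_two {v : Fin 2 → ℤ}
    (hv : IsPrimitiveVector v) : ∃ P : Matrix (Fin 2) (Fin 2) ℤ, P.det = 1 ∧ P.col 0 = v := by
  obtain ⟨g, h0, h1⟩ := hv.isCoprime_fin_two.exists_SL2_col 0
  refine ⟨g, g.2, ?_⟩
  ext i
  fin_cases i <;> simp [h0, h1]

lemma IsPrimitiveVector.exists_det_eq_one_col_eq_fin_three {v : Fin 3 → ℤ}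
    (hv : IsPrimitiveVector v) : ∃ P : Matrix (Fin 3) (Fin 3) ℤ, P.det = 1 ∧ P.col 0 = v := by
  obtain ⟨u, w, huw⟩ := hv.isCoprime_gcd_fin_three
  obtain hg | hg := eq_or_ne (Int.gcd (v 0) (v 1)) 0
  · obtain ⟨h0, h1⟩ := Int.gcd_eq_zero_iff.mp hg
    refine ⟨!![0, w, 0; 0, 0, 1; v 2, 0, 0], ?_, ?_⟩
    · simpa [det_fin_three, hg] using huw
    · ext i
      fin_cases i <;> simp [h0, h1]
  · obtain ⟨a, ha⟩ := Int.gcd_dvd_left (v 0) (v 1)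
    obtain ⟨b, hb⟩ := Int.gcd_dvd_right (v 0) (v 1)
    set x := Int.gcdA (v 0) (v 1)
    set y := Int.gcdB (v 0) (v 1)
    have hab : a * x + b * y = 1 := by
      refine mul_left_cancel₀ (Int.natCast_ne_zero.mpr hg) ?_
      linear_combination -x * ha - y * hb - Int.gcd_eq_gcd_ab (v 0) (v 1)
    refine ⟨!![v 0, -y, -w * a; v 1, x, -w * b; v 2, 0, u], ?_, ?_⟩
    · simp [det_fin_three]
      linear_combination u * x * ha + u * y * hb + (w * v 2 + u * (v 0).gcd (v 1)) * hab + huw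
    · ext i
      fin_cases i <;> simp

lemma Int.exists_sq_two_mul_mul_add_le_sq (M t : ℤ) (hM : 0 < M) :
    ∃ x, (2 * (M * x + t)) ^ 2 ≤ M ^ 2 := by
  refine ⟨-((2 * t + M) / (2 * M)), ?_⟩
  have h0 := Int.emod_nonneg (2 * t + M) (by positivity : 2 * M ≠ 0)
  have h1 := Int.emod_lt_of_pos (2 * t + M) (by positivity : 0 < 2 * M)
  have h2 := Int.mul_ediv_add_emod (2 * t + M) (2 * M)
  nlinarith

namespace Matrix

lemma IsSymm.mul_dotProduct_mulVec_fin_two {B : Matrix (Fin 2) (Fin 2) ℤ} (hB : B.IsSymm)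
    (v : Fin 2 → ℤ) :
    B 0 0 * (v ⬝ᵥ B *ᵥ v) = (B 0 0 * v 0 + B 0 1 * v 1) ^ 2 + B.det * v 1 ^ 2 := by
  simp only [dotProduct, mulVec, Fin.sum_univ_two, det_fin_two, hB.apply 0 1]
  ring

lemma PosDef.three_mul_sq_le_four_mul_det_of_corner_min {B : Matrix (Fin 2) (Fin 2) ℤ}
    (hB : B.PosDef) (hmin : ∀ w ≠ 0, B 0 0 ≤ w ⬝ᵥ B *ᵥ w) : 3 * B 0 0 ^ 2 ≤ 4 * B.det := by
  obtain ⟨x, hx⟩ := Int.exists_sq_two_mul_mul_add_le_sq (B 0 0) (B 0 1) (hB.corner_pos 0)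
  have hle := hmin ![x, 1] (by simp)
  have hid := hB.isSymm_int.mul_dotProduct_mulVec_fin_two ![x, 1]
  simp only [cons_val_zero, cons_val_one, one_pow, mul_one] at hid
  nlinarith [hB.corner_pos 0]

lemma PosDef.exists_three_mul_sq_le_four_mul_det {A : Matrix (Fin 2) (Fin 2) ℤ}
    (hA : A.PosDef) : ∃ v ≠ 0, 3 * (v ⬝ᵥ A *ᵥ v) ^ 2 ≤ 4 * A.det := by
  obtain ⟨P, hP, hmin⟩ := hA.exists_transpose_mul_mul_corner_min 0
    fun _ ↦ IsPrimitiveVector.exists_det_eq_one_col_eq_fin_two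
  refine ⟨P *ᵥ Pi.single 0 1, mulVec_ne_zero_of_det_eq_one hP (by simp), ?_⟩
  rw [← dotProduct_mulVec_transpose_mul_mul, single_dotProduct_mulVec_single,
    ← det_transpose_mul_mul (A := A) hP]
  exact (hA.transpose_mul_mul hP).three_mul_sq_le_four_mul_det_of_corner_min hmin

lemma PosDef.exists_sq_add_two_mul_sq_of_det_eq_two {A : Matrix (Fin 2) (Fin 2) ℤ}
    (hA : A.PosDef) (hdet : A.det = 2) (v : Fin 2 → ℤ) :
    ∃ Y Z : ℤ, v ⬝ᵥ A *ᵥ v = Y ^ 2 + 2 * Z ^ 2 := by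
  obtain ⟨P, hP, hmin⟩ := hA.exists_transpose_mul_mul_corner_min 0
    fun _ ↦ IsPrimitiveVector.exists_det_eq_one_col_eq_fin_two
  set B := Pᵀ * A * P
  have hB : B.PosDef := hA.transpose_mul_mul hP
  have hdetB : B.det = 2 := (det_transpose_mul_mul hP).trans hdet
  have hB1 : B 0 0 = 1 := by
    have := hB.three_mul_sq_le_four_mul_det_of_corner_min hmin
    nlinarith [hB.corner_pos 0]
  obtain ⟨w, hw⟩ := exists_dotProduct_mulVec_eq_transpose_mul_mul (A := A) hP v
  refine ⟨w 0 + B 0 1 * w 1, w 1, ?_⟩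
  have := hB.isSymm_int.mul_dotProduct_mulVec_fin_two w
  rw [hB1, hdetB] at this
  linear_combination hw + this

/-- The Schur complement of the corner entry, multiplied by `B 0 0` to stay integral. -/
def schurCorner (B : Matrix (Fin 3) (Fin 3) ℤ) : Matrix (Fin 2) (Fin 2) ℤ :=
  of fun i j ↦ B 0 0 * B i.succ j.succ - B 0 i.succ * B 0 j.succ

variable {B : Matrix (Fin 3) (Fin 3) ℤ}

lemma IsSymm.mul_dotProduct_mulVec_fin_three (hB : B.IsSymm) (v : Fin 3 → ℤ) :
    B 0 0 * (v ⬝ᵥ B *ᵥ v) = (B 0 0 * v 0 + B 0 1 * v 1 + B 0 2 * v 2) ^ 2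
      + ![v 1, v 2] ⬝ᵥ schurCorner B *ᵥ ![v 1, v 2] := by
  simp [dotProduct, mulVec, Fin.sum_univ_three, Fin.sum_univ_two, schurCorner, hB.apply 0 1,
    hB.apply 0 2, hB.apply 1 2]
  ring

lemma IsSymm.schurCorner (hB : B.IsSymm) : B.schurCorner.IsSymm := by
  ext i j
  simp only [Matrix.schurCorner, transpose_apply, of_apply, hB.apply i.succ j.succ]
  ring

lemma IsSymm.det_schurCorner (hB : B.IsSymm) : B.schurCorner.det = B 0 0 * B.det := by
  simp [det_fin_two, det_fin_three, Matrix.schurCorner, hB.apply 0 1, hB.apply 0 2, hB.apply 1 2]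
  ring

lemma PosDef.three_mul_sq_le_schurCorner (hB : B.PosDef) (hmin : ∀ w ≠ 0, B 0 0 ≤ w ⬝ᵥ B *ᵥ w)
    {u : Fin 2 → ℤ} (hu : u ≠ 0) : 3 * B 0 0 ^ 2 ≤ 4 * (u ⬝ᵥ B.schurCorner *ᵥ u) := by
  obtain ⟨y, z, rfl⟩ : ∃ y z, u = ![y, z] := ⟨u 0, u 1, by ext i; fin_cases i <;> rfl⟩
  obtain ⟨x, hx⟩ :=
    Int.exists_sq_two_mul_mul_add_le_sq (B 0 0) (B 0 1 * y + B 0 2 * z) (hB.corner_pos 0)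
  have hw : ![x, y, z] ≠ 0 := fun h ↦ hu <| by
    ext i
    fin_cases i
    exacts [congrFun h 1, congrFun h 2]
  have hle := hmin _ hw
  have hid := hB.isSymm_int.mul_dotProduct_mulVec_fin_three ![x, y, z]
  simp only [cons_val_zero, cons_val_one, cons_val_two, head_cons, tail_cons] at hid
  nlinarith [hB.corner_pos 0]

lemma PosDef.schurCorner (hB : B.PosDef) (hmin : ∀ w ≠ 0, B 0 0 ≤ w ⬝ᵥ B *ᵥ w) :
    B.schurCorner.PosDef := by
  refine posDef_iff_dotProduct_mulVec.mpr
    ⟨isHermitian_iff_isSymm.mpr hB.isSymm_int.schurCorner, fun u hu ↦ ?_⟩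
  rw [star_trivial]
  nlinarith [hB.three_mul_sq_le_schurCorner hmin hu, hB.corner_pos 0]

lemma PosDef.corner_eq_one_of_det_eq_two (hB : B.PosDef) (hmin : ∀ w ≠ 0, B 0 0 ≤ w ⬝ᵥ B *ᵥ w)
    (hdet : B.det = 2) : B 0 0 = 1 := by
  obtain ⟨u, hu, hS⟩ := (hB.schurCorner hmin).exists_three_mul_sq_le_four_mul_det
  rw [hB.isSymm_int.det_schurCorner, hdet] at hS
  have hM := hB.corner_pos 0
  have hsq : (3 * B 0 0 ^ 2) ^ 2 ≤ (4 * (u ⬝ᵥ B.schurCorner *ᵥ u)) ^ 2 :=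
    pow_le_pow_left₀ (by positivity) (hB.three_mul_sq_le_schurCorner hmin hu) 2
  -- `hS` and `hsq` give `27 M⁴ ≤ 128 M` for the minimum `M = B 0 0`.
  have hcube : B 0 0 ^ 3 < 5 := by
    refine lt_of_mul_lt_mul_left ?_ (by positivity : 0 ≤ 27 * B 0 0)
    linarith
  nlinarith

lemma PosDef.exists_sq_add_sq_add_two_mul_sq_of_det_eq_two {A : Matrix (Fin 3) (Fin 3) ℤ}
    (hA : A.PosDef) (hdet : A.det = 2) (v : Fin 3 → ℤ) :
    ∃ X Y Z : ℤ, v ⬝ᵥ A *ᵥ v = X ^ 2 + Y ^ 2 + 2 * Z ^ 2 := by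
  obtain ⟨P, hP, hmin⟩ := hA.exists_transpose_mul_mul_corner_min 0
    fun _ ↦ IsPrimitiveVector.exists_det_eq_one_col_eq_fin_three
  set B := Pᵀ * A * P
  have hB : B.PosDef := hA.transpose_mul_mul hP
  have hdetB : B.det = 2 := (det_transpose_mul_mul hP).trans hdet
  have hB1 : B 0 0 = 1 := hB.corner_eq_one_of_det_eq_two hmin hdetB
  have hdetS : B.schurCorner.det = 2 := by
    rw [hB.isSymm_int.det_schurCorner, hB1, hdetB, one_mul]
  obtain ⟨w, hw⟩ := exists_dotProduct_mulVec_eq_transpose_mul_mul (A := A) hP v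
  obtain ⟨Y, Z, hYZ⟩ :=
    (hB.schurCorner hmin).exists_sq_add_two_mul_sq_of_det_eq_two hdetS ![w 1, w 2]
  refine ⟨w 0 + B 0 1 * w 1 + B 0 2 * w 2, Y, Z, ?_⟩
  have := hB.isSymm_int.mul_dotProduct_mulVec_fin_three w
  rw [hB1] at this
  linear_combination hw + this + hYZ

lemma posDef_and_det_eq_two_of_mul_eq {n β γ δ p : ℤ} (hn : 0 < n) (hp : 0 < p)
    (hβ : n * β = p + 1) (hδ : p * δ = n * γ ^ 2 + 2) :
    (!![n, 1, 0; 1, β, γ; 0, γ, δ]).PosDef ∧ (!![n, 1, 0; 1, β, γ; 0, γ, δ]).det = 2 := by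
  refine ⟨posDef_iff_dotProduct_mulVec.mpr ⟨?_, fun w hw ↦ ?_⟩, ?_⟩
  · exact isHermitian_iff_isSymm.mpr (by ext i j; fin_cases i <;> fin_cases j <;> rfl)
  · have hid : n * p * (w ⬝ᵥ !![n, 1, 0; 1, β, γ; 0, γ, δ] *ᵥ w)
        = p * (n * w 0 + w 1) ^ 2 + (p * w 1 + n * γ * w 2) ^ 2 + 2 * n * w 2 ^ 2 := by
      simp [dotProduct, mulVec, Fin.sum_univ_three]
      linear_combination (p * w 1 ^ 2) * hβ + (n * w 2 ^ 2) * hδ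
    rw [star_trivial]
    by_contra! hle
    have hsum : p * (n * w 0 + w 1) ^ 2 + (p * w 1 + n * γ * w 2) ^ 2 + 2 * n * w 2 ^ 2 ≤ 0 :=
      hid ▸ mul_nonpos_of_nonneg_of_nonpos (by positivity) hle
    have ha : 0 ≤ p * (n * w 0 + w 1) ^ 2 := by positivity
    have hb := sq_nonneg (p * w 1 + n * γ * w 2)
    have hc : 0 ≤ 2 * n * w 2 ^ 2 := by positivity
    have h2 : w 2 = 0 := by simpa [hn.ne'] using (by linarith : 2 * n * w 2 ^ 2 = 0)
    have h1 : w 1 = 0 := by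
      simpa [h2, hp.ne'] using (by linarith : (p * w 1 + n * γ * w 2) ^ 2 = 0)
    have h0 : w 0 = 0 := by
      simpa [h1, hp.ne', hn.ne'] using (by linarith : p * (n * w 0 + w 1) ^ 2 = 0)
    exact hw (by ext i; fin_cases i <;> assumption)
  · simp [det_fin_three]
    linear_combination δ * hβ + hδ

end Matrix

lemma exists_prime_gt_modEq_two_mul_sub_one {n : ℕ} (hn : Odd n) (N : ℕ) :
    ∃ p > N, p.Prime ∧ p ≡ 2 * n - 1 [MOD 8 * n] := by
  have : NeZero (8 * n) := ⟨by positivity [hn.pos]⟩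
  -- `2n - 1` is its own inverse mod `8n`, as `(2n - 1)² - 1 = 4n(n - 1)` and `n - 1` is even.
  have hunit : IsUnit ((2 * n - 1 : ℕ) : ZMod (8 * n)) := by
    refine IsUnit.of_mul_eq_one ((2 * n - 1 : ℕ) : ZMod (8 * n)) ?_
    obtain ⟨k, rfl⟩ := hn
    have h := ZMod.natCast_self (8 * (2 * k + 1))
    push_cast [Nat.cast_sub (by omega : 1 ≤ 2 * (2 * k + 1))] at h ⊢
    linear_combination (k : ZMod (8 * (2 * k + 1))) * h
  obtain ⟨p, hpN, hp, hpa⟩ := Nat.forall_exists_prime_gt_and_eq_mod hunit N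
  exact ⟨p, hpN, hp, (ZMod.natCast_eq_natCast_iff _ _ _).mp hpa⟩

lemma isSquare_neg_two_mul {n p : ℕ} [Fact p.Prime] (hn : Odd n) (hpn : n ∣ p + 1)
    (hp8 : p % 8 = (2 * n - 1) % 8) : IsSquare ((-2 * n : ℤ) : ZMod p) := by
  obtain ⟨k, rfl⟩ := hn
  have hp4 : p % 4 = 1 := by omega
  have hmod : (p : ℤ) % (2 * k + 1 : ℕ) = -1 % (2 * k + 1 : ℕ) := by
    refine (Int.modEq_iff_dvd.mpr ?_).symm
    simpa using Int.natCast_dvd_natCast.mpr hpn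
  apply ZMod.isSquare_of_jacobiSym_eq_one
  -- `(-2n / p) = (-2 / p) (p / n) = (-2 / p) (-1 / n)`, and both factors flip with `n mod 4`.
  rw [jacobiSym.mul_left, jacobiSym.at_neg_two (Nat.odd_iff.mpr (by omega)),
    jacobiSym.quadratic_reciprocity_one_mod_four' (odd_two_mul_add_one k) hp4,
    jacobiSym.mod_left' hmod, jacobiSym.at_neg_one (odd_two_mul_add_one k),
    ZMod.χ₈'_nat_eq_if_mod_eight, ZMod.χ₄_nat_eq_if_mod_four]
  split_ifs <;> omega

lemma exists_prime_dvd_mul_sq_add_two {n : ℕ} (hn : Odd n) :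
    ∃ p : ℕ, p.Prime ∧ n ∣ p + 1 ∧ ∃ γ : ℤ, (p : ℤ) ∣ n * γ ^ 2 + 2 := by
  obtain ⟨p, hpn, hp, hmod⟩ := exists_prime_gt_modEq_two_mul_sub_one hn n
  have : Fact p.Prime := ⟨hp⟩
  have hdvd : n ∣ p + 1 := by
    have h := (hmod.of_mul_left 8).add_right 1
    rw [Nat.sub_add_cancel (by linarith [hn.pos])] at h
    exact Nat.modEq_zero_iff_dvd.mp (h.trans (Nat.modEq_zero_iff_dvd.mpr (dvd_mul_left n 2)))
  obtain ⟨s, hs⟩ := isSquare_neg_two_mul hn hdvd (hmod.of_mul_right n)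
  have hn0 : (n : ZMod p) ≠ 0 := by
    rw [Ne, ZMod.natCast_eq_zero_iff]
    exact fun h ↦ absurd (Nat.le_of_dvd hn.pos h) (by omega)
  refine ⟨p, hp, hdvd, ((s * (n : ZMod p)⁻¹).val : ℤ), ?_⟩
  rw [← ZMod.intCast_zmod_eq_zero_iff_dvd]
  push_cast
  rw [ZMod.natCast_zmod_val]
  push_cast at hs
  field_simp
  linear_combination -hs

theorem Odd.exists_eq_sq_add_sq_add_two_mul_sq {n : ℕ} (hn : Odd n) :
    ∃ X Y Z : ℤ, (n : ℤ) = X ^ 2 + Y ^ 2 + 2 * Z ^ 2 := by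
  obtain ⟨p, hp, ⟨β, hβ⟩, γ, δ, hδ⟩ := exists_prime_dvd_mul_sq_add_two hn
  obtain ⟨hA, hdet⟩ := Matrix.posDef_and_det_eq_two_of_mul_eq (β := β) (γ := γ)
    (by exact_mod_cast hn.pos) (by exact_mod_cast hp.pos) (by exact_mod_cast hβ.symm) hδ.symm
  simpa using hA.exists_sq_add_sq_add_two_mul_sq_of_det_eq_two hdet (Pi.single 0 1)

theorem A3_A1_form_universal (m : ℕ) :
    ∃ a b c d : ℤ,
      a ^ 2 + a * b + b ^ 2 + a * c + b * c + c ^ 2 + d ^ 2 = m := by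
  obtain rfl | hm := eq_or_ne m 0
  · exact ⟨0, 0, 0, 0, by norm_num⟩
  obtain ⟨n, d, hn, rfl⟩ : ∃ n d : ℕ, Odd n ∧ m = n + d ^ 2 := by
    rcases Nat.even_or_odd m with h | h
    · exact ⟨m - 1, 1, Nat.Even.sub_odd (by omega) h odd_one, by omega⟩
    · exact ⟨m, 0, h, by simp⟩
  obtain ⟨X, Y, Z, h⟩ := hn.exists_eq_sq_add_sq_add_two_mul_sq
  exact ⟨Y + Z, X - Z, Z - Y, d, by push_cast; linear_combination -h⟩
end

section
/- Let p be an odd prime and let a_0, ..., a_{p-1} be integers with s := Σ a_j satisfying 0 ≤ s ≤ (p-1)/2. Then (1/2)(p·Σ a_j^2 − s^2) ≥ s(p−s)/2, with equality if and only if exactly s of the a_j equal 1 and the remaining p−s equal 0. -/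
open Finset

theorem min_of_half_p_sum_sq_sub_s_sq (p : ℕ) (hp : p.Prime) (hodd : Odd p)
    (a : Fin p → ℤ) (s : ℤ) (hs : s = ∑ j : Fin p, a j)
    (hs0 : 0 ≤ s) (hs1 : s ≤ (p - 1) / 2) :
    ((1 : ℚ) / 2) * ((p : ℚ) * (∑ j : Fin p, (a j : ℚ) ^ 2) - (s : ℚ) ^ 2)
        ≥ (s : ℚ) * ((p : ℚ) - s) / 2 ∧
      (((1 : ℚ) / 2) * ((p : ℚ) * (∑ j : Fin p, (a j : ℚ) ^ 2) - (s : ℚ) ^ 2)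
          = (s : ℚ) * ((p : ℚ) - s) / 2 ↔
        (∀ j, a j = 0 ∨ a j = 1) ∧
          ((Finset.univ.filter (fun j => a j = 1)).card : ℤ) = s) := by
  set T : ℤ := ∑ j : Fin p, (a j) ^ 2 with hT
  have hcast : (∑ j : Fin p, (a j : ℚ) ^ 2) = (T : ℚ) := by
    rw [hT]; push_cast; ring
  have hterm : ∀ j : Fin p, a j ≤ (a j) ^ 2 := fun j => Int.le_self_sq (a j)
  have hTs : s ≤ T := by
    rw [hs, hT]; exact Finset.sum_le_sum fun j _ => hterm j
  have hp1 : (1 : ℚ) ≤ (p : ℚ) := by exact_mod_cast hp.one_lt.le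
  have hTsq : (s : ℚ) ≤ (T : ℚ) := by exact_mod_cast hTs
  constructor
  · rw [hcast]
    nlinarith [mul_le_mul_of_nonneg_left hTsq (by linarith : (0:ℚ) ≤ (p:ℚ))]
  · rw [hcast]
    constructor
    · intro heq
      have hpq : (p : ℚ) ≠ 0 := by linarith
      have hTsℚ : (T : ℚ) = s := by
        have : (p : ℚ) * ((T : ℚ) - s) = 0 := by ring_nf; ring_nf at heq; linarith
        rcases mul_eq_zero.1 this with h | h
        · exact absurd h hpq
        · linarith
      have hTs' : T = s := by exact_mod_cast hTsℚ
      have hzero : ∀ j : Fin p, (a j) ^ 2 - a j = 0 := by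
        have hsum : ∑ j : Fin p, ((a j) ^ 2 - a j) = 0 := by
          rw [Finset.sum_sub_distrib, ← hT, ← hs, hTs', sub_self]
        intro j
        have := (Finset.sum_eq_zero_iff_of_nonneg
          (fun j _ => by linarith [hterm j])).1 hsum j (Finset.mem_univ j)
        exact this
      have h01 : ∀ j, a j = 0 ∨ a j = 1 := by
        intro j
        have h := hzero j
        have : a j * (a j - 1) = 0 := by ring_nf; linarith [h]
        rcases mul_eq_zero.1 this with h' | h'
        · exact Or.inl h'
        · exact Or.inr (by linarith)
      refine ⟨h01, ?_⟩
      have : s = ∑ j : Fin p, (if a j = 1 then (1:ℤ) else 0) := by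
        rw [hs]
        refine Finset.sum_congr rfl fun j _ => ?_
        rcases h01 j with h | h <;> simp [h]
      rw [this, Finset.sum_boole]
    · rintro ⟨h01, -⟩
      have : T = s := by
        rw [hT, hs]
        refine Finset.sum_congr rfl fun j _ => ?_
        rcases h01 j with h | h <;> simp [h]
      rw [this]; ring
end

section
/- For any prime p ≥ 11, any integer s with 0 ≤ s ≤ (p-1)/2, and any nonnegative integer r, there exist integers a_0, ..., a_{p-1} with Σ a_j = s and (1/2)(p·Σ a_j^2 − s^2) = s(p−s)/2 + r·p. -/
/-!
Given `∑ a = s`, the quadratic identity holds exactly when `∑ a ^ 2 = s + 2 r`. Start from `s`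
ones and `p - s` zeroes, which realise `r = 0`. Replacing two equal entries `(c, c)` by
`(c + n, c - n)` keeps the sum and raises the sum of squares by `2 n ^ 2`; doing this on four
disjoint pairs of equal entries and writing `r` as a sum of four squares (Lagrange) reaches
every `r`.
-/

open Finset

section PairShift

variable {ι : Type*} [DecidableEq ι]

def shiftPair (f : ι → ℤ) (i j : ι) (n : ℤ) : ι → ℤ :=
  f + Pi.single i n - Pi.single j n

lemma shiftPair_apply_of_ne {f : ι → ℤ} {i j k : ι} (n : ℤ) (hi : k ≠ i) (hj : k ≠ j) :
    shiftPair f i j n k = f k := by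
  simp [shiftPair, hi, hj]

variable [Fintype ι]

lemma sum_shiftPair (f : ι → ℤ) (i j : ι) (n : ℤ) :
    ∑ k, shiftPair f i j n k = ∑ k, f k := by
  simp [shiftPair, sum_add_distrib, sum_sub_distrib]

lemma sum_sq_shiftPair {f : ι → ℤ} {i j : ι} (hij : i ≠ j) (hf : f i = f j) (n : ℤ) :
    ∑ k, shiftPair f i j n k ^ 2 = ∑ k, f k ^ 2 + 2 * n ^ 2 := by
  have hpoint : ∀ k, shiftPair f i j n k ^ 2 =
      f k ^ 2 + (Pi.single i (2 * f i * n + n ^ 2) : ι → ℤ) k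
        + (Pi.single j (n ^ 2 - 2 * f j * n) : ι → ℤ) k := by
    intro k
    by_cases hki : k = i
    · subst hki
      simp only [shiftPair, Pi.sub_apply, Pi.add_apply, Pi.single_eq_same, Pi.single_eq_of_ne hij]
      ring
    by_cases hkj : k = j
    · subst hkj
      simp only [shiftPair, Pi.sub_apply, Pi.add_apply, Pi.single_eq_same,
        Pi.single_eq_of_ne hij.symm]
      ring
    simp [shiftPair, hki, hkj]
  simp only [hpoint, sum_add_distrib, Fintype.sum_pi_single']
  rw [hf]
  ring

theorem exists_sum_eq_sum_sq_eq_add_of_pairs {m : ℕ} (f : ι → ℤ) (i j : Fin m → ι)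
    (hij : Function.Injective (Sum.elim i j)) (hf : ∀ k, f (i k) = f (j k)) (v : Fin m → ℤ) :
    ∃ g : ι → ℤ, ∑ k, g k = ∑ k, f k ∧ ∑ k, g k ^ 2 = ∑ k, f k ^ 2 + 2 * ∑ k, v k ^ 2 := by
  induction m generalizing f with
  | zero => exact ⟨f, rfl, by simp⟩
  | succ m ih =>
    have hi0 : ∀ k : Fin m, i k.succ ≠ i 0 ∧ i k.succ ≠ j 0 ∧ j k.succ ≠ i 0 ∧ j k.succ ≠ j 0 :=
      fun k => ⟨hij.ne (a₁ := .inl k.succ) (a₂ := .inl 0) (by simp [Fin.succ_ne_zero]),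
        hij.ne (a₁ := .inl k.succ) (a₂ := .inr 0) (by simp),
        hij.ne (a₁ := .inr k.succ) (a₂ := .inl 0) (by simp),
        hij.ne (a₁ := .inr k.succ) (a₂ := .inr 0) (by simp [Fin.succ_ne_zero])⟩
    have hsub : Function.Injective (Sum.elim (i ∘ Fin.succ) (j ∘ Fin.succ)) :=
      Sum.elim_comp_map ▸
        hij.comp (Sum.map_injective.mpr ⟨Fin.succ_injective _, Fin.succ_injective _⟩)
    have hij0 : i 0 ≠ j 0 := hij.ne (a₁ := .inl 0) (a₂ := .inr 0) (by simp)
    obtain ⟨g, hg, hg2⟩ := ih (shiftPair f (i 0) (j 0) (v 0)) (i ∘ Fin.succ) (j ∘ Fin.succ)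
      hsub (fun k => by
        obtain ⟨h1, h2, h3, h4⟩ := hi0 k
        simp only [Function.comp, shiftPair_apply_of_ne _ h1 h2, shiftPair_apply_of_ne _ h3 h4, hf])
      (v ∘ Fin.succ)
    refine ⟨g, by rw [hg, sum_shiftPair], ?_⟩
    rw [hg2, sum_sq_shiftPair hij0 (hf 0), Fin.sum_univ_succ]
    simp only [Function.comp]
    ring

end PairShift

theorem exists_sum_eq_sum_sq_eq {n s : ℕ} (hn : 9 ≤ n) (hs : s ≤ n) (r : ℕ) :
    ∃ a : Fin n → ℤ, ∑ j, a j = s ∧ ∑ j, a j ^ 2 = s + 2 * r := by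
  set f : Fin n → ℤ := fun j => if (j : ℕ) < s then 1 else 0 with hf
  have hsum : ∑ j, f j = s := by
    simp [hf, sum_boole, Fin.card_filter_val_lt, hs]
  have hsq : ∑ j, f j ^ 2 = s := by
    rw [← hsum]
    exact sum_congr rfl fun j _ => by simp only [hf]; split_ifs <;> norm_num
  -- With `o = s % 2`, `s - o` is even, so no pair `(o + 2k, o + 2k + 1)` straddles `s`.
  let i : Fin 4 → Fin n := fun k => ⟨s % 2 + 2 * k, by omega⟩
  let j : Fin 4 → Fin n := fun k => ⟨s % 2 + 2 * k + 1, by omega⟩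
  have hij : Function.Injective (Sum.elim i j) :=
    .sumElim (fun k l h => by simp only [i, Fin.mk.injEq] at h; omega)
      (fun k l h => by simp only [j, Fin.mk.injEq] at h; omega)
      (fun k l h => by simp only [i, j, Fin.mk.injEq] at h; omega)
  have hfij : ∀ k, f (i k) = f (j k) := by
    intro k
    simp only [hf, i, j]
    split_ifs <;> omega
  obtain ⟨A, B, C, D, hr⟩ := Nat.sum_four_squares r
  obtain ⟨a, ha, ha2⟩ := exists_sum_eq_sum_sq_eq_add_of_pairs f i j hij hfij ![A, B, C, D]
  refine ⟨a, ha.trans hsum, ?_⟩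
  rw [ha2, hsq, Fin.sum_univ_four, ← hr]
  simp

theorem values_attained_p_ge_11_general (p : ℕ) (hp11 : 11 ≤ p)
    (s : ℤ) (hs0 : 0 ≤ s) (hs1 : s ≤ (p - 1) / 2) (r : ℕ) :
    ∃ a : Fin p → ℤ, (∑ j : Fin p, a j) = s ∧
      ((1 : ℚ) / 2) * ((p : ℚ) * (∑ j : Fin p, (a j : ℚ) ^ 2) - (s : ℚ) ^ 2)
        = (s : ℚ) * ((p : ℚ) - s) / 2 + (r : ℚ) * p := by
  lift s to ℕ using hs0
  obtain ⟨a, ha, ha2⟩ := exists_sum_eq_sum_sq_eq (n := p) (s := s) (by omega) (by omega) r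
  refine ⟨a, ha, ?_⟩
  have ha2' : ∑ j, (a j : ℚ) ^ 2 = s + 2 * r := by exact_mod_cast ha2
  rw [ha2']
  push_cast
  ring

theorem values_attained_p_ge_11 (p : ℕ) (hp : p.Prime) (hp11 : 11 ≤ p)
    (s : ℤ) (hs0 : 0 ≤ s) (hs1 : s ≤ (p - 1) / 2) (r : ℕ) :
    ∃ a : Fin p → ℤ, (∑ j : Fin p, a j) = s ∧
      ((1 : ℚ) / 2) * ((p : ℚ) * (∑ j : Fin p, (a j : ℚ) ^ 2) - (s : ℚ) ^ 2)
        = (s : ℚ) * ((p : ℚ) - s) / 2 + (r : ℚ) * p :=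
  values_attained_p_ge_11_general p hp11 s hs0 hs1 r
end

section
/- Let m and n be coprime positive integers, α ∈ ℚ(ω_n), and let tr̄ denote the mean trace (trace divided by field degree). Then tr̄(ω_m·α) = (μ(m)/φ(m))·tr̄(α), where μ is the Möbius function and φ the Euler totient function. -/
/-!
The mean trace of an element of `ℂ` that is algebraic over `ℚ` is its normalized trace in any
finite extension of `ℚ` containing it, so it is `ℚ`-linear on algebraic numbers. Writing `α` as a
`ℚ`-combination of powers `ω_n ^ i`, it therefore suffices to treat `α = ω_n ^ i`, a root of unity
whose order `d` divides `n`. Then `ω_m * ω_n ^ i` has order `m * d`, and the mean trace of a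
primitive `k`-th root of unity is `μ(k) / φ(k)`: its conjugates are the primitive `k`-th roots,
whose sum is `μ(k)` by Möbius inversion of `∑_{d ∣ k} ∑_{ζ primitive d-th} ζ = [k = 1]`.
Multiplicativity of `μ` and `φ` concludes.
-/

open IntermediateField

/-- The mean trace of an algebraic number: the trace from `ℚ(x)` to `ℚ`
divided by the degree `[ℚ(x):ℚ]`. -/
noncomputable def meanTrace (x : ℂ) : ℚ :=
  Algebra.trace ℚ ℚ⟮x⟯ (IntermediateField.AdjoinSimple.gen ℚ x)
    / (Module.finrank ℚ ℚ⟮x⟯ : ℚ)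

open Polynomial Finset

theorem IsPrimitiveRoot.sum_nthRootsFinset_one {R : Type*} [CommRing R] [IsDomain R] {ζ : R}
    {N : ℕ} (hζ : IsPrimitiveRoot ζ N) :
    ∑ x ∈ nthRootsFinset N (1 : R), x = if N = 1 then 1 else 0 := by
  classical
  obtain rfl | hN := N.eq_zero_or_pos
  · simp
  have sum_eq_geom : ∑ x ∈ nthRootsFinset N (1 : R), x = ∑ i ∈ range N, ζ ^ i := by
    rw [nthRootsFinset, ← Multiset.toFinset_eq hζ.nthRoots_one_nodup, sum_mk, Multiset.map_id',
      hζ.nthRoots_eq (one_pow N)]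
    simp [Finset.sum]
  rw [sum_eq_geom]
  split_ifs with hN1
  · simp [hN1]
  · exact hζ.geom_sum_eq_zero (by omega)

theorem sum_primitiveRoots_eq_moebius {k : ℕ} (hk : 0 < k) :
    ∑ x ∈ primitiveRoots k ℂ, x = ArithmeticFunction.moebius k := by
  classical
  have sum_divisors : ∀ N > 0, ∑ d ∈ N.divisors, ∑ x ∈ primitiveRoots d ℂ, x
      = if N = 1 then (1 : ℂ) else 0 := by
    intro N hN
    rw [← sum_biUnion (fun a _ b _ hab => IsPrimitiveRoot.disjoint hab),
      ← IsPrimitiveRoot.nthRoots_one_eq_biUnion_primitiveRoots]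
    exact (Complex.isPrimitiveRoot_exp N hN.ne').sum_nthRootsFinset_one
  rw [← ArithmeticFunction.sum_eq_iff_sum_mul_moebius_eq.mp sum_divisors k hk,
    sum_eq_single (k, 1)]
  · simp
  · rintro ⟨a, b⟩ hab hne
    simp only [Nat.mem_divisorsAntidiagonal] at hab
    have hb : b ≠ 1 := by
      rintro rfl
      exact hne (by simp [← hab.1])
    simp [hb]
  · simp [hk.ne']

theorem IsPrimitiveRoot.meanTrace_eq {ζ : ℂ} {k : ℕ} (hζ : IsPrimitiveRoot ζ k) (hk : 0 < k) :
    meanTrace ζ = ArithmeticFunction.moebius k / k.totient := by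
  have hmin : minpoly ℚ ζ = cyclotomic k ℚ := (cyclotomic_eq_minpoly_rat hζ hk).symm
  have hfinrank : Module.finrank ℚ ℚ⟮ζ⟯ = k.totient := by
    rw [adjoin.finrank (hζ.isIntegral hk).tower_top, hmin, natDegree_cyclotomic]
  have : NeZero (k : ℂ) := ⟨by exact_mod_cast hk.ne'⟩
  have htrace : Algebra.trace ℚ ℚ⟮ζ⟯ (AdjoinSimple.gen ℚ ζ) = ArithmeticFunction.moebius k := by
    apply (algebraMap ℚ ℂ).injective
    refine (AdjoinSimple.trace_gen_eq_sum_roots ζ (IsAlgClosed.splits _)).trans ?_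
    rw [hmin, aroots_def, map_cyclotomic, cyclotomic.roots_eq_primitiveRoots_val, sum_val]
    exact (sum_primitiveRoots_eq_moebius hk).trans (by simp)
  rw [meanTrace, htrace, hfinrank]

theorem meanTrace_eq_normalizedTrace (K : IntermediateField ℚ ℂ) [FiniteDimensional ℚ K]
    (x : K) : meanTrace x = Algebra.normalizedTrace ℚ K x := by
  have hle : ℚ⟮(x : ℂ)⟯ ≤ K := adjoin_simple_le_iff.mpr x.2
  have : FiniteDimensional ℚ ℚ⟮(x : ℂ)⟯ :=
    adjoin.finiteDimensional ((Algebra.IsIntegral.isIntegral x).map K.val)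
  calc meanTrace x = Algebra.normalizedTrace ℚ ℚ⟮(x : ℂ)⟯ (AdjoinSimple.gen ℚ (x : ℂ)) := by
        rw [Algebra.normalizedTrace_eq_of_finiteDimensional_apply, meanTrace, smul_eq_mul,
          inv_mul_eq_div]
    _ = Algebra.normalizedTrace ℚ K x :=
        (Algebra.normalizedTrace_map ℚ K (inclusion hle) _).symm

theorem meanTrace_sum_smul {ι : Type*} (s : Finset ι) (c : ι → ℚ) {x : ι → ℂ}
    (hx : ∀ i ∈ s, IsIntegral ℚ (x i)) :
    meanTrace (∑ i ∈ s, c i • x i) = ∑ i ∈ s, c i * meanTrace (x i) := by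
  let K := adjoin ℚ (x '' s)
  have : FiniteDimensional ℚ K := finiteDimensional_adjoin (by simpa using hx)
  have hmem (i : s) : x i ∈ K := subset_adjoin _ _ (Set.mem_image_of_mem x i.2)
  have hsum : ∑ i ∈ s, c i • x i = ((∑ i ∈ s.attach, c i • ⟨x i, hmem i⟩ : K) : ℂ) := by
    push_cast
    exact (sum_attach s fun i => c i • x i).symm
  rw [hsum, meanTrace_eq_normalizedTrace, map_sum, ← sum_attach s fun i => c i * meanTrace (x i)]
  refine sum_congr rfl fun i _ => ?_
  rw [map_smul, smul_eq_mul, ← meanTrace_eq_normalizedTrace]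

theorem meanTrace_mul_of_coprime {ζ η : ℂ} (hζ : IsOfFinOrder ζ) (hη : IsOfFinOrder η)
    (h : (orderOf ζ).Coprime (orderOf η)) :
    meanTrace (ζ * η) = meanTrace ζ * meanTrace η := by
  have hprim : IsPrimitiveRoot (ζ * η) (orderOf ζ * orderOf η) :=
    (Commute.all ζ η).orderOf_mul_eq_mul_orderOf_of_coprime h ▸ IsPrimitiveRoot.orderOf _
  rw [hprim.meanTrace_eq (Nat.mul_pos hζ.orderOf_pos hη.orderOf_pos),
    (IsPrimitiveRoot.orderOf ζ).meanTrace_eq hζ.orderOf_pos,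
    (IsPrimitiveRoot.orderOf η).meanTrace_eq hη.orderOf_pos,
    ArithmeticFunction.isMultiplicative_moebius.map_mul_of_coprime h, Nat.totient_mul h]
  push_cast
  exact mul_div_mul_comm _ _ _ _

theorem meanTrace_omega_m_mul (m n : ℕ) (hm : 0 < m) (hn : 0 < n)
    (hmn : Nat.Coprime m n) (α : ℂ)
    (hα : α ∈ IntermediateField.adjoin ℚ
      {Complex.exp (2 * Real.pi * Complex.I / n)}) :
    meanTrace (Complex.exp (2 * Real.pi * Complex.I / m) * α)
      = ((ArithmeticFunction.moebius m : ℚ) / (Nat.totient m : ℚ)) * meanTrace α := by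
  set ωm := Complex.exp (2 * Real.pi * Complex.I / m)
  set ωn := Complex.exp (2 * Real.pi * Complex.I / n)
  have hωm : IsPrimitiveRoot ωm m := Complex.isPrimitiveRoot_exp m hm.ne'
  have hωn : IsPrimitiveRoot ωn n := Complex.isPrimitiveRoot_exp n hn.ne'
  have hωm_int : IsIntegral ℚ ωm := (hωm.isIntegral hm).tower_top
  have hωn_int : IsIntegral ℚ ωn := (hωn.isIntegral hn).tower_top
  obtain ⟨p, rfl⟩ : ∃ p : ℚ[X], aeval ωn p = α := by
    rwa [← mem_toSubalgebra, adjoin_simple_toSubalgebra_of_isAlgebraic hωn_int.isAlgebraic,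
      Algebra.adjoin_singleton_eq_range_aeval] at hα
  rw [aeval_eq_sum_range, mul_sum]
  simp_rw [mul_smul_comm]
  rw [meanTrace_sum_smul _ _ fun i _ => hωm_int.mul (hωn_int.pow i),
    meanTrace_sum_smul _ _ fun i _ => hωn_int.pow i, mul_sum]
  refine sum_congr rfl fun i _ => ?_
  have hcop : (orderOf ωm).Coprime (orderOf (ωn ^ i)) := by
    rw [← hωm.eq_orderOf]
    exact hmn.coprime_dvd_right (hωn.eq_orderOf ▸ orderOf_pow_dvd i)
  rw [meanTrace_mul_of_coprime (hωm.isOfFinOrder hm.ne') ((hωn.isOfFinOrder hn.ne').pow) hcop,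
    hωm.meanTrace_eq hm]
  ring
end
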